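/- For a loopless matroid M of rank r on a linearly ordered ground set and any flat X of M, the number (-1)^{rk(X)} μ(∅̂, X), where μ is the Möbius function of the lattice of flats, equals the number of nbc-sets whose closure is X. Consequently, the k-th Whitney number of the first kind (unsigned), i.e. (-1)^k times the coefficient of λ^{r-k} in the characteristic polynomial χ(M;λ) = Σ_{X flat} μ(∅̂,X) λ^{r - rk(X)}, equals the number of nbc-sets of size k. -/

import Mathlib

open scoped Classical

/-- A circuit of a matroid: a minimal dependent set. -/
def Matroid.IsCircuitF {α : Type*} (M : Matroid α) (C : Finset α) : Prop :=
  M.Dep ↑C ∧ ∀ D ⊂ C, M.Indep ↑D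

/-- A broken circuit: a circuit with its minimum element removed. -/
def Matroid.BrokenCircuit {α : Type*} [LinearOrder α] (M : Matroid α) (B : Finset α) : Prop :=
  ∃ C : Finset α, M.IsCircuitF C ∧ ∃ h : C.Nonempty, B = C.erase (C.min' h)

/-- An nbc-set: a set containing no broken circuit. -/
def Matroid.NbcSet {α : Type*} [LinearOrder α] (M : Matroid α) (I : Finset α) : Prop :=
  ∀ B : Finset α, M.BrokenCircuit B → ¬ B ⊆ I

/-- The rank of a set in a matroid: the largest size of an independent subset. -/
noncomputable def Matroid.mrk {α : Type*} (M : Matroid α) (X : Set α) : ℕ :=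
  sSup {n | ∃ I : Finset α, M.Indep ↑I ∧ ↑I ⊆ X ∧ I.card = n}

/-! Group the nbc-sets contained in a flat `X` by their closures: an nbc-set contains no circuit,
so it is a basis of its closure and its size is the rank of that flat. Hence
`∑_{Y ≤ X} (-1)^{rk Y} #{nbc I : cl I = Y} = ∑_{nbc I ⊆ X} (-1)^{|I|}`, and the right side
vanishes for `X ≠ ∅` because toggling `min X` is a sign-reversing involution on the nbc-subsets
of `X`. So `Y ↦ (-1)^{rk Y} #{nbc I : cl I = Y}` satisfies the recursion that determines
`μ(∅̂, ·)`, and summing over the flats of rank `k` gives the Whitney numbers. -/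

open Finset

theorem Finset.sum_neg_one_pow_card_eq_zero {α R : Type*} [DecidableEq α] [Ring R]
    {S : Finset (Finset α)} (a : α) (hinsert : ∀ I ∈ S, insert a I ∈ S)
    (herase : ∀ I ∈ S, I.erase a ∈ S) : ∑ I ∈ S, (-1 : R) ^ I.card = 0 := by
  have hpair : ∑ I ∈ S with a ∈ I, (-1 : R) ^ I.card =
      ∑ I ∈ S with a ∉ I, -(-1 : R) ^ I.card := by
    refine sum_nbij' (·.erase a) (insert a) (fun I hI => by simp_all)
      (fun I hI => by simp_all) (fun I hI => by simp_all) (fun I hI => by simp_all)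
      fun I hI => ?_
    simp only [mem_filter] at hI
    rw [← card_erase_add_one hI.2, pow_succ, mul_neg_one]
  rw [← S.sum_filter_add_sum_filter_not (a ∈ ·), hpair, sum_neg_distrib, neg_add_cancel]

theorem Finset.eqOn_of_sum_filter_subset_eq {α R : Type*} [Fintype α] [DecidableEq α]
    [AddCommGroup R] {P : Finset α → Prop} {f g : Finset α → R}
    (h : ∀ X, P X → ∑ Y ∈ univ.filter (fun Y : Finset α => P Y ∧ Y ⊆ X), f Y =
      ∑ Y ∈ univ.filter (fun Y : Finset α => P Y ∧ Y ⊆ X), g Y) :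
    ∀ X, P X → f X = g X := by
  intro X
  induction X using strongInduction with
  | H X ih =>
    intro hX
    have hXmem : X ∈ univ.filter (fun Y : Finset α => P Y ∧ Y ⊆ X) := by simp [hX]
    have hlower : ∑ Y ∈ (univ.filter (fun Y : Finset α => P Y ∧ Y ⊆ X)).erase X, f Y =
        ∑ Y ∈ (univ.filter (fun Y : Finset α => P Y ∧ Y ⊆ X)).erase X, g Y := by
      refine sum_congr rfl fun Y hY => ?_
      simp only [mem_erase, mem_filter, mem_univ, true_and] at hY
      exact ih Y (hY.2.2.ssubset_of_ne hY.1) hY.2.1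
    have hsum := h X hX
    rwa [← add_sum_erase _ _ hXmem, ← add_sum_erase _ _ hXmem, hlower, add_left_inj] at hsum

namespace Matroid

variable {α : Type*} {M : Matroid α} {I J C X : Finset α}

theorem isCircuitF_iff_isCircuit : M.IsCircuitF C ↔ M.IsCircuit ↑C := by
  rw [isCircuit_iff_dep_forall_sdiff_singleton_indep]
  refine ⟨fun h => ⟨h.1, fun e he => ?_⟩, fun h => ⟨h.1, fun D hD => ?_⟩⟩
  · simpa using h.2 _ (erase_ssubset he)
  · obtain ⟨e, heC, heD⟩ := exists_of_ssubset hD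
    refine (h.2 e heC).subset fun x hx => ⟨hD.subset hx, ?_⟩
    rintro rfl
    exact heD hx

theorem mrk_closure_eq_card (hI : M.Indep ↑I) : M.mrk (M.closure ↑I) = I.card := by
  refine IsGreatest.csSup_eq ⟨⟨I, hI, M.subset_closure _ hI.subset_ground, rfl⟩, ?_⟩
  rintro n ⟨J, hJ, hJI, rfl⟩
  have hle := (hJ.encard_le_eRk_of_subset hJI).trans_eq
    ((M.eRk_closure_eq _).trans hI.eRk_eq_encard)
  simpa [Set.encard_coe_eq_coe_finsetCard] using hle

theorem closure_toFinset_eq_iff [Fintype α] {Y : Finset α} :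
    (M.closure ↑I).toFinset = Y ↔ M.closure ↑I = ↑Y := by
  rw [← coe_inj, Set.coe_toFinset]

theorem subset_of_closure_eq {Y : Finset α} (hIE : ↑I ⊆ M.E) (h : M.closure ↑I = ↑Y) :
    I ⊆ Y := by
  rw [← coe_subset, ← h]
  exact M.subset_closure _ hIE

variable [LinearOrder α]

theorem NbcSet.mono (hJ : M.NbcSet J) (hIJ : I ⊆ J) : M.NbcSet I :=
  fun B hB hBI => hJ B hB (hBI.trans hIJ)

theorem nbcSet_empty [M.Loopless] : M.NbcSet ∅ := by
  rintro B ⟨C, hC, hCne, rfl⟩ hB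
  have hsub : (↑C : Set α) ⊆ {C.min' hCne} := fun x hx => by
    by_contra hxm
    exact notMem_empty x (hB (mem_erase.2 ⟨hxm, hx⟩))
  exact (loopless_iff_forall_isCircuit.1 ‹_› _ (isCircuitF_iff_isCircuit.1 hC)).not_subsingleton
    (Set.subsingleton_singleton.anti hsub)

theorem NbcSet.indep (hI : M.NbcSet I) (hIE : ↑I ⊆ M.E) : M.Indep ↑I := by
  by_contra hdep
  obtain ⟨C, hCI, hC⟩ := (M.dep_of_not_indep hdep hIE).exists_isCircuit_subset
  have hfin : C.Finite := I.finite_toSet.subset hCI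
  have hne : hfin.toFinset.Nonempty := by simpa using hC.nonempty
  rw [← hfin.coe_toFinset, ← isCircuitF_iff_isCircuit] at hC
  exact hI _ ⟨_, hC, hne, rfl⟩ ((erase_subset _ _).trans (hfin.toFinset_subset.2 hCI))

theorem NbcSet.insert_min' (hX : M.IsFlat ↑X) (hne : X.Nonempty) (hIX : I ⊆ X)
    (hI : M.NbcSet I) : M.NbcSet (insert (X.min' hne) I) := by
  rintro B ⟨C, hC, hCne, rfl⟩ hB
  by_cases hmin : X.min' hne ∈ C.erase (C.min' hCne)
  -- then the broken circuit lies in `X`, so `min C ∈ cl X = X`, yet `min C < min X`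
  · have hBX : C.erase (C.min' hCne) ⊆ X :=
      hB.trans (insert_subset (X.min'_mem hne) hIX)
    have hCmin : C.min' hCne ∈ X := by
      have hmem :=
        (isCircuitF_iff_isCircuit.1 hC).mem_closure_sdiff_singleton_of_mem (C.min'_mem hCne)
      rw [← coe_erase] at hmem
      have hcl := M.closure_subset_closure (coe_subset.2 hBX) hmem
      rwa [hX.closure, mem_coe] at hcl
    obtain ⟨hne', hmemC⟩ := mem_erase.1 hmin
    exact hne' (le_antisymm (X.min'_le _ hCmin) (C.min'_le _ hmemC))
  · refine hI _ ⟨C, hC, hCne, rfl⟩ fun x hx => ?_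
    rcases mem_insert.1 (hB hx) with rfl | h
    · exact absurd hx hmin
    · exact h

section Counting

variable [Fintype α]

theorem sum_nbcSet_subset_neg_one_pow [M.Loopless] (hX : M.IsFlat ↑X) :
    ∑ I ∈ univ.filter (fun I : Finset α => M.NbcSet I ∧ I ⊆ X), (-1 : ℤ) ^ I.card =
      if X = ∅ then 1 else 0 := by
  rcases X.eq_empty_or_nonempty with rfl | hne
  · have hsingleton : univ.filter (fun I : Finset α => M.NbcSet I ∧ I ⊆ ∅) = {∅} := by
      ext I
      simp only [mem_filter, mem_univ, true_and, subset_empty,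
        mem_singleton, and_iff_right_iff_imp]
      rintro rfl
      exact nbcSet_empty
    rw [hsingleton, sum_singleton, card_empty, pow_zero, if_pos rfl]
  · rw [if_neg hne.ne_empty]
    refine sum_neg_one_pow_card_eq_zero (X.min' hne) (fun I hI => ?_) (fun I hI => ?_) <;>
      simp only [mem_filter, mem_univ, true_and] at hI ⊢
    · exact ⟨hI.1.insert_min' hX hne hI.2, insert_subset (X.min'_mem hne) hI.2⟩
    · exact ⟨hI.1.mono (erase_subset _ _), (erase_subset _ _).trans hI.2⟩

variable (hE : M.E = Set.univ)
include hE

theorem sum_isFlat_subset_neg_one_pow_mrk_mul_card_nbcSet [M.Loopless] (hX : M.IsFlat ↑X) :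
    ∑ Y ∈ univ.filter (fun Y : Finset α => M.IsFlat ↑Y ∧ Y ⊆ X),
      (-1 : ℤ) ^ M.mrk ↑Y *
      ((univ.filter fun I : Finset α => M.NbcSet I ∧ M.closure ↑I = ↑Y).card : ℤ) =
      if X = ∅ then 1 else 0 := by
  have hmaps : ∀ I ∈ univ.filter (fun I : Finset α => M.NbcSet I ∧ I ⊆ X),
      (M.closure ↑I).toFinset ∈
        univ.filter (fun Y : Finset α => M.IsFlat ↑Y ∧ Y ⊆ X) := by
    intro I hI
    simp only [mem_filter, mem_univ, true_and, Set.coe_toFinset] at hI ⊢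
    refine ⟨M.isFlat_closure _, fun x hx => ?_⟩
    have hcl := M.closure_subset_closure (coe_subset.2 hI.2) (Set.mem_toFinset.1 hx)
    rwa [hX.closure, mem_coe] at hcl
  rw [← sum_nbcSet_subset_neg_one_pow hX, ← sum_fiberwise_of_maps_to hmaps]
  refine sum_congr rfl fun Y hY => ?_
  have hfiber : (univ.filter fun I : Finset α => M.NbcSet I ∧ I ⊆ X).filter
      (fun I : Finset α => (M.closure ↑I).toFinset = Y) =
      univ.filter fun I : Finset α => M.NbcSet I ∧ M.closure ↑I = ↑Y := by
    ext I
    simp only [mem_filter, mem_univ, true_and, closure_toFinset_eq_iff]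
    refine ⟨fun h => ⟨h.1.1, h.2⟩, fun h => ⟨⟨h.1, ?_⟩, h.2⟩⟩
    exact (subset_of_closure_eq (hE ▸ Set.subset_univ _) h.2).trans (mem_filter.1 hY).2.2
  rw [hfiber, sum_congr rfl fun I hI => ?_, sum_const, nsmul_eq_mul, mul_comm]
  simp only [mem_filter, mem_univ, true_and] at hI
  rw [← hI.2, mrk_closure_eq_card (hI.1.indep (hE ▸ Set.subset_univ _))]

theorem card_nbcSet_eq_sum_card_nbcSet_closure_eq (k : ℕ) :
    (univ.filter fun I : Finset α => M.NbcSet I ∧ I.card = k).card =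
      ∑ X ∈ univ.filter (fun X : Finset α => M.IsFlat ↑X ∧ M.mrk ↑X = k),
        (univ.filter fun I : Finset α => M.NbcSet I ∧ M.closure ↑I = ↑X).card := by
  have hindep : ∀ {I}, M.NbcSet I → M.Indep ↑I :=
    fun hI => hI.indep (hE ▸ Set.subset_univ _)
  rw [card_eq_sum_card_fiberwise (f := fun I : Finset α => (M.closure ↑I).toFinset)]
  · refine sum_congr rfl fun X hX => congrArg card ?_
    ext I
    simp only [mem_filter, mem_univ, true_and, closure_toFinset_eq_iff] at hX ⊢
    refine ⟨fun h => ⟨h.1.1, h.2⟩, fun h => ⟨⟨h.1, ?_⟩, h.2⟩⟩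
    rw [← hX.2, ← h.2, mrk_closure_eq_card (hindep h.1)]
  · intro I hI
    simp only [coe_filter, mem_univ, true_and, Set.mem_ofPred_eq,
      Set.coe_toFinset] at hI ⊢
    exact ⟨M.isFlat_closure _, hI.2 ▸ mrk_closure_eq_card (hindep hI.1)⟩

end Counting

end Matroid

theorem stmt_4_general {α : Type*} [Fintype α] [LinearOrder α] (M : Matroid α)
    (hE : M.E = Set.univ) (hLoopless : ∀ e : α, M.Indep {e}) (μ : Finset α → ℤ)
    (hμ : ∀ X : Finset α, M.IsFlat ↑X →
      (∑ Y ∈ Finset.univ.filter fun Y : Finset α => M.IsFlat ↑Y ∧ Y ⊆ X, μ Y) =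
        if (↑X : Set α) = M.closure ∅ then 1 else 0) :
    (∀ X : Finset α, M.IsFlat ↑X →
      (-1 : ℤ) ^ (M.mrk ↑X) * μ X =
        ((Finset.univ.filter fun I : Finset α => M.NbcSet I ∧ M.closure ↑I = ↑X).card : ℤ)) ∧
    (∀ k : ℕ,
      (-1 : ℤ) ^ k *
          (∑ X ∈ Finset.univ.filter fun X : Finset α => M.IsFlat ↑X ∧ M.mrk ↑X = k, μ X) =
        ((Finset.univ.filter fun I : Finset α => M.NbcSet I ∧ I.card = k).card : ℤ)) := by
  have : M.Loopless :=
    Matroid.loopless_iff_forall_isNonloop.2 fun e _ => Matroid.indep_singleton.1 (hLoopless e)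
  have hμ_eq := eqOn_of_sum_filter_subset_eq (P := fun X : Finset α => M.IsFlat ↑X) (f := μ)
    (g := fun X => (-1 : ℤ) ^ M.mrk ↑X *
      ((univ.filter fun I : Finset α => M.NbcSet I ∧ M.closure ↑I = ↑X).card : ℤ))
    fun X hX => by
      rw [hμ X hX, M.sum_isFlat_subset_neg_one_pow_mrk_mul_card_nbcSet hE hX]
      simp only [Matroid.closure_empty, Matroid.loops_eq_empty, coe_eq_empty]
  have hsign : ∀ X : Finset α, M.IsFlat ↑X → (-1 : ℤ) ^ (M.mrk ↑X) * μ X =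
      ((univ.filter fun I : Finset α => M.NbcSet I ∧ M.closure ↑I = ↑X).card : ℤ) :=
    fun X hX => by
      rw [hμ_eq X hX, ← mul_assoc, ← mul_pow, neg_one_mul, neg_neg, one_pow, one_mul]
  refine ⟨hsign, fun k => ?_⟩
  rw [M.card_nbcSet_eq_sum_card_nbcSet_closure_eq hE, Nat.cast_sum, mul_sum]
  refine sum_congr rfl fun X hX => ?_
  obtain ⟨hXflat, hXk⟩ := (mem_filter.1 hX).2
  rw [← hXk, hsign X hXflat]

/-- Whitney's theorem: `(-1)^{rk X} μ(∅̂,X)` counts nbc-sets with closure `X`, and the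
unsigned Whitney number `w_k` counts nbc-sets of size `k`. -/
theorem stmt_4 {α : Type*} [Fintype α] [LinearOrder α] (M : Matroid α)
    (hE : M.E = Set.univ) (hLoopless : ∀ e : α, M.Indep {e}) (r : ℕ)
    (hr : M.mrk Set.univ = r) (μ : Finset α → ℤ)
    (hμ : ∀ X : Finset α, M.IsFlat ↑X →
      (∑ Y ∈ Finset.univ.filter fun Y : Finset α => M.IsFlat ↑Y ∧ Y ⊆ X, μ Y) =
        if (↑X : Set α) = M.closure ∅ then 1 else 0) :
    (∀ X : Finset α, M.IsFlat ↑X →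
      (-1 : ℤ) ^ (M.mrk ↑X) * μ X =
        ((Finset.univ.filter fun I : Finset α => M.NbcSet I ∧ M.closure ↑I = ↑X).card : ℤ)) ∧
    (∀ k : ℕ,
      (-1 : ℤ) ^ k *
          (∑ X ∈ Finset.univ.filter fun X : Finset α => M.IsFlat ↑X ∧ M.mrk ↑X = k, μ X) =
        ((Finset.univ.filter fun I : Finset α => M.NbcSet I ∧ I.card = k).card : ℤ)) :=
  stmt_4_general M hE hLoopless μ hμ
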